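/- Let p, p̃ : ℝ → ℝ be functions differentiable at c = −2 such that for all c in some neighborhood of −2 one has f_c³(p(c)) = p(c) and f_c³(p̃(c)) = p̃(c), with p(−2) = 2 cos(4π/7) and p̃(−2) = 2 cos(4π/9). Then there exists δ > 0 such that for every parameter c ∈ (−2, −2 + δ) one has |M(c, p(c))| > |M(c, p̃(c))|, where M(c, x) := 8 x (x² + c) ((x² + c)² + c) is the derivative of f_c³ at x. That is, for c slightly larger than −2 the multiplier of the period-3 orbit through p(c) is strictly larger in absolute value than the multiplier of the period-3 orbit through p̃(c). -/

import Mathlib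

/-!
At `c = -2` the substitution `x = 2 cos θ` conjugates `f_c` to angle doubling, so `2 cos (4π/7)`
and `2 cos (4π/9)` are period-3 points, roots of `x³ + x² - 2x - 1` and `x³ - 3x + 1`; reducing
modulo these cubics gives the multipliers `8` and `-8`. Differentiating `f_c³ (p c) = p c`
determines `p'(-2)`, and then the multipliers along the two orbits have derivatives `-16` and `24`
at `-2`. Hence `|M c (p c)| - |M c (p̃ c)|` vanishes at `-2` with derivative `8 > 0`.
-/

open Real Filter

/-- The quadratic map `f_c(x) = x² + c`. -/
def fc (c : ℝ) : ℝ → ℝ := fun x => x ^ 2 + c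

/-- The derivative of the third iterate `f_c³` at `x`. -/
def M (c x : ℝ) : ℝ := 8 * x * (x ^ 2 + c) * ((x ^ 2 + c) ^ 2 + c)

open Topology

theorem two_cos_four_pi_div_seven_cubic :
    (2 * cos (4 * π / 7)) ^ 3 + (2 * cos (4 * π / 7)) ^ 2 - 2 * (2 * cos (4 * π / 7)) - 1 = 0 := by
  set t := cos (4 * π / 7)
  -- `θ = 4π/7` satisfies `cos 4θ = cos 3θ`; of the resulting quartic's roots, `t = 1` is excluded.
  have h4 : cos (4 * (4 * π / 7)) = 2 * (2 * t ^ 2 - 1) ^ 2 - 1 := by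
    rw [show 4 * (4 * π / 7) = 2 * (2 * (4 * π / 7)) by ring, cos_two_mul, cos_two_mul]
  have h43 : cos (4 * (4 * π / 7)) = cos (3 * (4 * π / 7)) := by
    rw [show 4 * (4 * π / 7) = 4 * π - 3 * (4 * π / 7) by ring, cos_sub,
      show 4 * π = 2 * π + 2 * π by ring]
    simp
  have ht : t ≤ 0 := by
    apply cos_nonpos_of_pi_div_two_le_of_le <;> linarith [pi_pos]
  have hfactor : (t - 1) * (8 * t ^ 3 + 4 * t ^ 2 - 4 * t - 1) = 0 := by
    linear_combination h43 - h4 + cos_three_mul (4 * π / 7)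
  rcases mul_eq_zero.mp hfactor with h | h
  · linarith
  · linear_combination h

theorem two_cos_four_pi_div_nine_cubic :
    (2 * cos (4 * π / 9)) ^ 3 - 3 * (2 * cos (4 * π / 9)) + 1 = 0 := by
  have h3 : cos (3 * (4 * π / 9)) = -(1 / 2) := by
    rw [show 3 * (4 * π / 9) = π / 3 + π by ring, cos_add_pi, cos_pi_div_three]
  linear_combination 2 * h3 - 2 * cos_three_mul (4 * π / 9)

theorem M_neg_two_of_cubic_seven {x : ℝ} (hx : x ^ 3 + x ^ 2 - 2 * x - 1 = 0) :
    M (-2) x = 8 := by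
  unfold M
  linear_combination ((8 : ℝ) + 16 * x - 24 * x ^ 2 - 8 * x ^ 3 + 8 * x ^ 4) * hx

theorem M_neg_two_of_cubic_nine {x : ℝ} (hx : x ^ 3 - 3 * x + 1 = 0) :
    M (-2) x = -8 := by
  unfold M
  linear_combination ((8 : ℝ) - 8 * x - 24 * x ^ 2 + 8 * x ^ 4) * hx

theorem HasDerivAt.fc {q : ℝ → ℝ} {Q c₀ : ℝ} (hq : HasDerivAt q Q c₀) :
    HasDerivAt (fun c => fc c (q c)) (2 * q c₀ * Q + 1) c₀ :=
  ((hq.fun_pow 2).fun_add (hasDerivAt_id c₀)).congr_deriv (by simp)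

theorem hasDerivAt_M_of_cubic_seven {p : ℝ → ℝ} {P : ℝ} (hp : HasDerivAt p P (-2))
    (hfix : ∀ᶠ c in 𝓝 (-2 : ℝ), (fc c)^[3] (p c) = p c)
    (ha : p (-2) ^ 3 + p (-2) ^ 2 - 2 * p (-2) - 1 = 0) :
    HasDerivAt (fun c => M c (p c)) (-16) (-2) := by
  have hy := hp.fc
  have hz := hy.fc
  have hfixed := (hz.fc.congr_of_eventuallyEq (EventuallyEq.symm hfix)).unique hp
  simp only [fc] at hfixed
  set a := p (-2)
  have h7 : 7 * P = 5 - 2 * a - 2 * a ^ 2 := by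
    linear_combination hfixed + (((-6 : ℝ) + 10 * a + 4 * a ^ 2 - 4 * a ^ 3)
      + ((-8 : ℝ) - 16 * a + 24 * a ^ 2 + 8 * a ^ 3 - 8 * a ^ 4) * P) * ha
  refine (((hp.const_mul 8).fun_mul hy).fun_mul hz).congr_deriv ?_
  simp only [fc]
  linear_combination ((-32 / 7 : ℝ) + (240 / 7) * a ^ 2 - (240 / 7) * a ^ 4
          + 8 * a ^ 6) * h7
        + ((48 / 7 : ℝ) - (608 / 7) * a + (536 / 7) * a ^ 3 - 16 * a ^ 5) * ha

theorem hasDerivAt_M_of_cubic_nine {p : ℝ → ℝ} {P : ℝ} (hp : HasDerivAt p P (-2))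
    (hfix : ∀ᶠ c in 𝓝 (-2 : ℝ), (fc c)^[3] (p c) = p c)
    (hb : p (-2) ^ 3 - 3 * p (-2) + 1 = 0) :
    HasDerivAt (fun c => M c (p c)) 24 (-2) := by
  have hy := hp.fc
  have hz := hy.fc
  have hfixed := (hz.fc.congr_of_eventuallyEq (EventuallyEq.symm hfix)).unique hp
  simp only [fc] at hfixed
  set b := p (-2)
  have h9 : 9 * P = -7 - 2 * b + 2 * b ^ 2 := by
    linear_combination -hfixed + (((-4 : ℝ) - 10 * b + 4 * b ^ 3)
      + ((8 : ℝ) - 8 * b - 24 * b ^ 2 + 8 * b ^ 4) * P) * hb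
  refine (((hp.const_mul 8).fun_mul hy).fun_mul hz).congr_deriv ?_
  simp only [fc]
  linear_combination ((-32 / 9 : ℝ) + (80 / 3) * b ^ 2 - (80 / 3) * b ^ 4
          + (56 / 9) * b ^ 6) * h9
        + ((8 / 9 : ℝ) + (664 / 9) * b + (248 / 9) * b ^ 2 - (536 / 9) * b ^ 3
          - (112 / 9) * b ^ 4 + (112 / 9) * b ^ 5) * hb

theorem eventually_pos_nhdsGT_of_hasDerivAt {h : ℝ → ℝ} {h' x₀ : ℝ} (hh : HasDerivAt h h' x₀)
    (h₀ : h x₀ = 0) (hpos : 0 < h') : ∀ᶠ x in 𝓝[>] x₀, 0 < h x := by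
  have hslope : ∀ᶠ x in 𝓝[>] x₀, 0 < slope h x₀ x :=
    (hasDerivWithinAt_iff_tendsto_slope' (lt_irrefl x₀)).mp hh.hasDerivWithinAt
      |>.eventually (eventually_gt_nhds hpos)
  filter_upwards [hslope, self_mem_nhdsWithin] with x hx (hx₀ : x₀ < x)
  rwa [slope_def_field, h₀, sub_zero, div_pos_iff_of_pos_right (sub_pos.mpr hx₀)] at hx

theorem eventually_abs_lt_abs_nhdsGT {f g : ℝ → ℝ} {f' g' x₀ : ℝ} (hf : HasDerivAt f f' x₀)
    (hg : HasDerivAt g g' x₀) (hf₀ : 0 < f x₀) (hfg : f x₀ + g x₀ = 0) (hderiv : 0 < f' + g') :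
    ∀ᶠ x in 𝓝[>] x₀, |g x| < |f x| := by
  have hsum := eventually_pos_nhdsGT_of_hasDerivAt (hf.fun_add hg) hfg hderiv
  have hdiff : ∀ᶠ x in 𝓝 x₀, 0 < f x - g x :=
    continuousAt_const.eventually_lt (hf.continuousAt.fun_sub hg.continuousAt) (by linarith)
  filter_upwards [hsum, nhdsWithin_le_nhds hdiff] with x hs hd
  exact (abs_lt.mpr ⟨by linarith, by linarith⟩).trans_le (le_abs_self _)

theorem stmt_19 (p ptilde : ℝ → ℝ)
    (hp : DifferentiableAt ℝ p (-2)) (hptilde : DifferentiableAt ℝ ptilde (-2))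
    (hpfix : ∀ᶠ c in nhds (-2 : ℝ), (fc c)^[3] (p c) = p c)
    (hptildefix : ∀ᶠ c in nhds (-2 : ℝ), (fc c)^[3] (ptilde c) = ptilde c)
    (hpval : p (-2) = 2 * Real.cos (4 * π / 7))
    (hptildeval : ptilde (-2) = 2 * Real.cos (4 * π / 9)) :
    ∃ δ : ℝ, 0 < δ ∧ ∀ c : ℝ, -2 < c → c < -2 + δ →
      |M c (ptilde c)| < |M c (p c)| := by
  have hcubic_p := hpval ▸ two_cos_four_pi_div_seven_cubic
  have hcubic_ptilde := hptildeval ▸ two_cos_four_pi_div_nine_cubic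
  have hlarger := eventually_abs_lt_abs_nhdsGT
    (hasDerivAt_M_of_cubic_seven hp.hasDerivAt hpfix hcubic_p)
    (hasDerivAt_M_of_cubic_nine hptilde.hasDerivAt hptildefix hcubic_ptilde)
    (by rw [M_neg_two_of_cubic_seven hcubic_p]; norm_num)
    (by rw [M_neg_two_of_cubic_seven hcubic_p, M_neg_two_of_cubic_nine hcubic_ptilde]; norm_num)
    (by norm_num)
  obtain ⟨u, hu, hsub⟩ := mem_nhdsGT_iff_exists_Ioo_subset.mp hlarger
  exact ⟨u + 2, by linarith [hu.out], fun c hc hcδ => hsub ⟨hc, by linarith⟩⟩
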